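/- Let σ = τ_λ with λ ∈ {1, x, y}, let ε ∈ {1,-1}, and let u = δ + αx + βy + γz with δ, α, β, γ ∈ O_K, σ(u) = ε·u, and ν_D(u) = 0 (u is a unit of O_D). Then there exists an invertible t ∈ D with u = σ(t)·(δ + αx)·t; that is, the one-dimensional ε-hermitian forms ⟨u⟩ and ⟨δ + αx⟩ over (D, σ) are isometric. -/

import Mathlib

/-!
Write `u = u₀ + w` with `u₀ = δ + αx ∈ K(x)` and `w = βy + γz ∈ K(x)y`. For `λ ∈ {1, x, y}` the
involution `σ` is diagonal in the basis `1, x, y, z`, so `σ u₀ = ε u₀` and `σ w = ε w`. As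
`ν_D(u) = 0` and `ν(ϖ) = 1`, `Nrd u₀ = Nrd u + ϖ(β² - aγ²)` is a unit, and `v = u₀⁻¹ w` satisfies
`v² = c := ϖ(β² - aγ²) / Nrd u₀ ∈ m_K`. Hensel's lemma (Newton's iteration for square roots) gives
`p` with `4p²(1 - p²) = c`; then `t = p + v / (2p)` satisfies `t² = 1 + v` and `σ(t) u₀ = u₀ t`, so
`σ(t) u₀ t = u₀ t² = u₀ + w = u`.
-/

noncomputable section

/-- A surjective discrete valuation `ν : K → ℤ` on a field `K`
(the value of `ν` at `0` is irrelevant: only nonzero elements are constrained). -/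
structure DVal (K : Type) [Field K] : Type where
  ν : K → ℤ
  ν_mul : ∀ x y : K, x ≠ 0 → y ≠ 0 → ν (x * y) = ν x + ν y
  ν_add : ∀ x y : K, x ≠ 0 → y ≠ 0 → x + y ≠ 0 → min (ν x) (ν y) ≤ ν (x + y)
  ν_one : ν 1 = 0
  ν_surj : ∀ n : ℤ, ∃ x : K, x ≠ 0 ∧ ν x = n

namespace DVal

variable {K : Type} [Field K]

/-- `x` belongs to the valuation ring `O_K`. -/
def Int (V : DVal K) (x : K) : Prop := x = 0 ∨ 0 ≤ V.ν x

/-- `x` is a unit of the valuation ring `O_K`. -/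
def IntUnit (V : DVal K) (x : K) : Prop := x ≠ 0 ∧ V.ν x = 0

/-- `x` belongs to the maximal ideal `m_K` of the valuation ring `O_K`. -/
def MaxIdeal (V : DVal K) (x : K) : Prop := x = 0 ∨ 1 ≤ V.ν x

/-- `K` is complete with respect to the valuation `ν`: every Cauchy sequence converges. -/
def IsComplete (V : DVal K) : Prop :=
  ∀ f : ℕ → K,
    (∀ M : ℤ, ∃ N : ℕ, ∀ m n : ℕ, N ≤ m → N ≤ n →
      f m - f n = 0 ∨ M ≤ V.ν (f m - f n)) →
    ∃ L : K, ∀ M : ℤ, ∃ N : ℕ, ∀ n : ℕ, N ≤ n →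
      f n - L = 0 ∨ M ≤ V.ν (f n - L)

/-- The residue field `k = O_K/m_K` has characteristic different from `2`,
i.e. `2` is a unit of the valuation ring `O_K`. -/
def ResCharNeTwo (V : DVal K) : Prop := (2 : K) ≠ 0 ∧ V.ν 2 = 0

end DVal

/-- The reduced norm of a quaternion `u = δ + αx + βy + γz ∈ ℍ[K,a,b]`:
`Nrd u = u·τ(u) = δ² - aα² - bβ² + abγ²`. -/
def qnrd {K : Type} [Field K] (a b : K) (u : QuaternionAlgebra K a 0 b) : K :=
  u.re ^ 2 - a * u.imI ^ 2 - b * u.imJ ^ 2 + a * b * u.imK ^ 2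

/-- The canonical involution `τ(δ + αx + βy + γz) = δ - αx - βy - γz` of `ℍ[K,a,b]`. -/
def qtau {K : Type} [Field K] {a b : K} (u : QuaternionAlgebra K a 0 b) :
    QuaternionAlgebra K a 0 b :=
  ⟨u.re, -u.imI, -u.imJ, -u.imK⟩

/-- The norm form `⟨1,-a,-b,ab⟩` of `ℍ[K,a,b]` is anisotropic over `K`
(equivalently, `ℍ[K,a,b]` is a division ring). -/
def QAniso {K : Type} [Field K] (a b : K) : Prop :=
  ∀ d e f g : K, d ^ 2 - a * e ^ 2 - b * f ^ 2 + a * b * g ^ 2 = 0 →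
    d = 0 ∧ e = 0 ∧ f = 0 ∧ g = 0

/-- The valuation `ν_D(u) = (1/2)·ν_K(Nrd u)` of the quaternion division algebra
`D = ℍ[K,a,b]` (at nonzero `u`). -/
def qnu {K : Type} [Field K] (V : DVal K) (a b : K) (u : QuaternionAlgebra K a 0 b) : ℚ :=
  (V.ν (qnrd a b u) : ℚ) / 2

namespace DVal

variable {K : Type} [Field K] (V : DVal K)

/-- `ν x ≥ k`, where `x = 0` counts as `ν 0 = ∞`. -/
def AtLeast (k : ℤ) (x : K) : Prop := x = 0 ∨ k ≤ V.ν x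

variable {V}

lemma ν_neg_one : V.ν (-1) = 0 := by
  have h := V.ν_mul (-1) (-1) (by norm_num) (by norm_num)
  rw [neg_one_mul, neg_neg, V.ν_one] at h
  omega

lemma ν_neg {x : K} (hx : x ≠ 0) : V.ν (-x) = V.ν x := by
  rw [← neg_one_mul, V.ν_mul _ _ (by norm_num) hx, ν_neg_one, zero_add]

lemma ν_inv {x : K} (hx : x ≠ 0) : V.ν x⁻¹ = -V.ν x := by
  have h := V.ν_mul x x⁻¹ hx (inv_ne_zero hx)
  rw [mul_inv_cancel₀ hx, V.ν_one] at h
  omega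

lemma AtLeast.mono {k l : ℤ} {x : K} (hx : V.AtLeast k x) (hlk : l ≤ k) : V.AtLeast l x :=
  hx.imp_right (hlk.trans ·)

lemma AtLeast.neg {k : ℤ} {x : K} (hx : V.AtLeast k x) : V.AtLeast k (-x) := by
  rcases eq_or_ne x 0 with rfl | hx0
  · exact Or.inl neg_zero
  · exact Or.inr (by rw [ν_neg hx0]; exact hx.resolve_left hx0)

lemma AtLeast.add {k : ℤ} {x y : K} (hx : V.AtLeast k x) (hy : V.AtLeast k y) :
    V.AtLeast k (x + y) := by
  rcases eq_or_ne x 0 with rfl | hx0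
  · rwa [zero_add]
  rcases eq_or_ne y 0 with rfl | hy0
  · rwa [add_zero]
  by_cases hxy : x + y = 0
  · exact Or.inl hxy
  have := V.ν_add x y hx0 hy0 hxy
  exact Or.inr (by have := hx.resolve_left hx0; have := hy.resolve_left hy0; omega)

lemma AtLeast.sub {k : ℤ} {x y : K} (hx : V.AtLeast k x) (hy : V.AtLeast k y) :
    V.AtLeast k (x - y) := by
  rw [sub_eq_add_neg]; exact hx.add hy.neg

lemma AtLeast.mul {k l : ℤ} {x y : K} (hx : V.AtLeast k x) (hy : V.AtLeast l y) :
    V.AtLeast (k + l) (x * y) := by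
  rcases eq_or_ne x 0 with rfl | hx0
  · exact Or.inl (zero_mul y)
  rcases eq_or_ne y 0 with rfl | hy0
  · exact Or.inl (mul_zero x)
  rw [AtLeast, V.ν_mul x y hx0 hy0]
  exact Or.inr (add_le_add (hx.resolve_left hx0) (hy.resolve_left hy0))

lemma IntUnit.atLeast_zero {x : K} (hx : V.IntUnit x) : V.AtLeast 0 x := Or.inr hx.2.ge

lemma IntUnit.mul {x y : K} (hx : V.IntUnit x) (hy : V.IntUnit y) : V.IntUnit (x * y) :=
  ⟨mul_ne_zero hx.1 hy.1, by rw [V.ν_mul x y hx.1 hy.1, hx.2, hy.2, add_zero]⟩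

lemma IntUnit.inv {x : K} (hx : V.IntUnit x) : V.IntUnit x⁻¹ :=
  ⟨inv_ne_zero hx.1, by rw [ν_inv hx.1, hx.2, neg_zero]⟩

lemma IntUnit.add_atLeast_one {x y : K} (hx : V.IntUnit x) (hy : V.AtLeast 1 y) :
    V.IntUnit (x + y) := by
  rcases eq_or_ne y 0 with rfl | hy0
  · rwa [add_zero]
  have hy1 := hy.resolve_left hy0
  obtain ⟨hx0, hνx⟩ := hx
  have hxy : x + y ≠ 0 := fun h => by
    rw [add_eq_zero_iff_eq_neg.mp h, ν_neg hy0] at hνx; omega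
  have h₁ := V.ν_add x y hx0 hy0 hxy
  have h₂ := V.ν_add (x + y) (-y) hxy (neg_ne_zero.2 hy0) (by rwa [add_neg_cancel_right])
  rw [add_neg_cancel_right, ν_neg hy0] at h₂
  exact ⟨hxy, by omega⟩

lemma AtLeast.div_intUnit {k : ℤ} {x y : K} (hx : V.AtLeast k x) (hy : V.IntUnit y) :
    V.AtLeast k (x / y) := by
  simpa [div_eq_mul_inv] using hx.mul hy.inv.atLeast_zero

lemma eq_zero_of_forall_atLeast {x : K} (hx : ∀ k, V.AtLeast k x) : x = 0 :=
  by_contra fun hx0 => by have := (hx (V.ν x + 1)).resolve_left hx0; omega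

lemma ne_zero_of_atLeast_one_sub_one {x : K} (hx : V.AtLeast 1 (x - 1)) : x ≠ 0 := by
  rintro rfl
  rcases hx with h | h
  · norm_num at h
  · rw [zero_sub, ν_neg_one] at h; omega

end DVal

def newtonSqrt {K : Type} [Field K] (e : K) : ℕ → K
  | 0 => 1
  | n + 1 => (newtonSqrt e n + e / newtonSqrt e n) / 2

namespace DVal

variable {K : Type} [Field K] {V : DVal K} {e : K}

lemma newtonSqrt_invariant (h2 : V.IntUnit 2) (he : V.AtLeast 1 (e - 1)) (n : ℕ) :
    V.IntUnit (newtonSqrt e n) ∧ V.AtLeast (n + 1) (newtonSqrt e n ^ 2 - e) := by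
  induction n with
  | zero => exact ⟨⟨one_ne_zero, V.ν_one⟩, by simpa [newtonSqrt, neg_sub] using he.neg⟩
  | succ n ih =>
    obtain ⟨hx, hsq⟩ := ih
    set x := newtonSqrt e n
    have h2x : V.IntUnit (2 * x) := h2.mul hx
    have hnext : newtonSqrt e (n + 1) = (2 * x * x + -(x ^ 2 - e)) / (2 * x) := by
      simp only [newtonSqrt, x]; field_simp [h2.1, hx.1]; ring
    have herr : newtonSqrt e (n + 1) ^ 2 - e = (x ^ 2 - e) * (x ^ 2 - e) / (2 * x) ^ 2 := by
      rw [hnext]; field_simp [h2.1, hx.1]; ring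
    refine ⟨?_, ?_⟩
    · rw [hnext, div_eq_mul_inv]
      exact ((h2x.mul hx).add_atLeast_one ((hsq.mono (by omega)).neg)).mul h2x.inv
    · rw [herr]
      exact ((hsq.mul hsq).div_intUnit (by rw [sq]; exact h2x.mul h2x)).mono (by push_cast; omega)

lemma newtonSqrt_succ_sub (h2 : V.IntUnit 2) (he : V.AtLeast 1 (e - 1)) (n : ℕ) :
    V.AtLeast (n + 1) (newtonSqrt e (n + 1) - newtonSqrt e n) := by
  obtain ⟨hx, hsq⟩ := newtonSqrt_invariant h2 he n
  have h : newtonSqrt e (n + 1) - newtonSqrt e n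
      = -(newtonSqrt e n ^ 2 - e) / (2 * newtonSqrt e n) := by
    simp only [newtonSqrt]; field_simp [h2.1, hx.1]; ring
  rw [h]
  exact hsq.neg.div_intUnit (h2.mul hx)

lemma newtonSqrt_sub_of_le (h2 : V.IntUnit 2) (he : V.AtLeast 1 (e - 1)) {n m : ℕ}
    (hnm : n ≤ m) : V.AtLeast (n + 1) (newtonSqrt e m - newtonSqrt e n) := by
  induction m, hnm using Nat.le_induction with
  | base => exact Or.inl (sub_self _)
  | succ m hnm ih =>
    rw [← sub_add_sub_cancel]
    exact ((newtonSqrt_succ_sub h2 he m).mono (by omega)).add ih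

lemma exists_sq_eq_of_atLeast_one_sub_one (hcomp : V.IsComplete) (h2 : V.IntUnit 2)
    (he : V.AtLeast 1 (e - 1)) : ∃ s : K, s ^ 2 = e ∧ V.AtLeast 1 (s - 1) := by
  set f := newtonSqrt e
  have hfar : ∀ M : ℤ, ∀ n m : ℕ, M.toNat ≤ n → n ≤ m → V.AtLeast M (f m - f n) :=
    fun M n m hn hnm => (newtonSqrt_sub_of_le h2 he hnm).mono (by omega)
  have hcauchy : ∀ M : ℤ, ∃ N : ℕ, ∀ m n : ℕ, N ≤ m → N ≤ n → V.AtLeast M (f m - f n) := by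
    refine fun M => ⟨M.toNat, fun m n hm hn => ?_⟩
    rcases le_total n m with h | h
    · exact hfar M n m hn h
    · simpa using (hfar M m n hm h).neg
  obtain ⟨L, hL⟩ : ∃ L, ∀ M : ℤ, ∃ N : ℕ, ∀ n, N ≤ n → V.AtLeast M (f n - L) :=
    hcomp f hcauchy
  refine ⟨L, sub_eq_zero.1 (eq_zero_of_forall_atLeast (V := V) fun k => ?_), ?_⟩
  · obtain ⟨N, hN⟩ := hL (max k 0)
    set n := max N (max k 0).toNat
    have hLn : V.AtLeast (max k 0) (L - f n) := by simpa using (hN n (le_max_left _ _)).neg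
    obtain ⟨hx, hsq⟩ := newtonSqrt_invariant h2 he n
    have hsum : V.AtLeast 0 (L + f n) := by
      rw [show L + f n = (L - f n) + 2 * f n by ring]
      exact (hLn.mono (le_max_right _ _)).add (h2.mul hx).atLeast_zero
    rw [show L ^ 2 - e = (L - f n) * (L + f n) + (f n ^ 2 - e) by ring]
    exact ((hLn.mul hsum).mono (by omega)).add (hsq.mono (by omega))
  · obtain ⟨N, hN⟩ := hL 1
    rw [show L - 1 = -(f N - L) + (f N - f 0) by rw [show f 0 = 1 from rfl]; ring]
    exact (hN N le_rfl).neg.add ((newtonSqrt_sub_of_le h2 he N.zero_le).mono (by simp))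

lemma exists_four_mul_sq_mul_one_sub_sq_eq (hcomp : V.IsComplete) (h2 : V.IntUnit 2) {c : K}
    (hc : V.AtLeast 1 c) : ∃ p : K, p ≠ 0 ∧ 4 * p ^ 2 * (1 - p ^ 2) = c := by
  obtain ⟨s, hs, hs1⟩ := exists_sq_eq_of_atLeast_one_sub_one hcomp h2 (e := 1 - c)
    (by simpa using hc.neg)
  -- `p² = (1 + s) / 2` with `s² = 1 - c`
  have hs1' : V.AtLeast 1 ((1 + s) / 2 - 1) := by
    rw [show (1 + s) / 2 - 1 = (s - 1) / 2 by field_simp [h2.1]; ring]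
    exact hs1.div_intUnit h2
  obtain ⟨p, hp, hp1⟩ := exists_sq_eq_of_atLeast_one_sub_one hcomp h2 hs1'
  refine ⟨p, ne_zero_of_atLeast_one_sub_one hp1, ?_⟩
  rw [hp]
  field_simp [h2.1]
  linear_combination (-4 : K) * hs

end DVal

section AntiMultiplicative

variable {K A : Type*} [Field K] [Ring A] [Algebra K A] {σ : A → A}

lemma map_smul_of_antimul (hmul : ∀ x y, σ (x * y) = σ y * σ x)
    (halg : ∀ r : K, σ (algebraMap K A r) = algebraMap K A r) (r : K) (x : A) :
    σ (r • x) = r • σ x := by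
  rw [Algebra.smul_def, hmul, halg, ← Algebra.commutes, ← Algebra.smul_def]

lemma mul_comm_of_map_eq_smul (hmul : ∀ x y, σ (x * y) = σ y * σ x) {ε : K} (hε : ε ≠ 0)
    {u w v : A} (hu : σ u = ε • u) (hw : σ w = ε • w) (hv : u * v = w) : σ v * u = u * v := by
  refine smul_right_injective A hε (?_ : ε • (σ v * u) = ε • (u * v))
  rw [← mul_smul_comm, ← hu, ← hmul, hv, hw]

lemma mul_self_algebraMap_add_smul (h2 : (2 : K) ≠ 0) {p c : K} (hp : p ≠ 0)
    (hc : 4 * p ^ 2 * (1 - p ^ 2) = c) {v : A} (hvv : v * v = algebraMap K A c) :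
    (algebraMap K A p + (2 * p)⁻¹ • v) * (algebraMap K A p + (2 * p)⁻¹ • v) = 1 + v := by
  rw [Algebra.algebraMap_eq_smul_one] at hvv ⊢
  simp only [add_mul, mul_add, smul_mul_smul_comm, one_mul, mul_one, hvv, smul_smul]
  match_scalars
  · field_simp; linear_combination -hc
  · field_simp; ring

lemma add_eq_map_mul_mul_of_eq_smul (hmul : ∀ x y, σ (x * y) = σ y * σ x)
    (hadd : ∀ x y, σ (x + y) = σ x + σ y)
    (halg : ∀ r : K, σ (algebraMap K A r) = algebraMap K A r) (h2 : (2 : K) ≠ 0)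
    {ε : K} (hε : ε ≠ 0) {u w v : A} (hu : σ u = ε • u) (hw : σ w = ε • w) (hv : u * v = w)
    {p c : K} (hp : p ≠ 0) (hc : 4 * p ^ 2 * (1 - p ^ 2) = c) (hvv : v * v = algebraMap K A c) :
    u + w = σ (algebraMap K A p + (2 * p)⁻¹ • v) * u * (algebraMap K A p + (2 * p)⁻¹ • v) := by
  have hcomm :
      σ (algebraMap K A p + (2 * p)⁻¹ • v) * u = u * (algebraMap K A p + (2 * p)⁻¹ • v) := by
    rw [hadd, halg, map_smul_of_antimul hmul halg, add_mul, mul_add, smul_mul_assoc, mul_smul_comm,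
      mul_comm_of_map_eq_smul hmul hε hu hw hv, Algebra.commutes]
  rw [hcomm, mul_assoc, mul_self_algebraMap_add_smul h2 hp hc hvv, mul_add, mul_one, hv]

end AntiMultiplicative

lemma conj_star_mul {R : Type*} [Ring R] [StarRing R] {lam mu : R} (h : mu * lam = 1) (x y : R) :
    lam * star (x * y) * mu = lam * star y * mu * (lam * star x * mu) := by
  rw [star_mul]
  simp only [mul_assoc]
  rw [← mul_assoc mu, h, one_mul]

lemma conj_star_eq_of_mul_eq {R : Type*} [Ring R] [StarRing R] {lam mu q q' : R} (h : lam * mu = 1)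
    (hq : lam * star q = q' * lam) : lam * star q * mu = q' := by
  rw [hq, mul_assoc, h, mul_one]

section Quaternion

open QuaternionAlgebra

variable {K : Type} [Field K] {a b : K}

lemma qtau_eq_star (u : QuaternionAlgebra K a 0 b) : qtau u = star u := by
  ext <;> simp [qtau]

lemma mul_star_eq_qnrd (u : QuaternionAlgebra K a 0 b) : u * star u = ↑(qnrd a b u) := by
  ext <;> simp [qnrd, -coe_sub, -coe_add, -coe_mul, -coe_pow] <;> ring

lemma star_mul_eq_qnrd (u : QuaternionAlgebra K a 0 b) : star u * u = ↑(qnrd a b u) := by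
  ext <;> simp [qnrd, -coe_sub, -coe_add, -coe_mul, -coe_pow] <;> ring

lemma qnrd_ne_zero (haniso : QAniso a b) {u : QuaternionAlgebra K a 0 b} (hu : u ≠ 0) :
    qnrd a b u ≠ 0 := fun h => by
  obtain ⟨h₁, h₂, h₃, h₄⟩ := haniso _ _ _ _ h
  exact hu (QuaternionAlgebra.ext h₁ h₂ h₃ h₄)

lemma isUnit_of_qAniso (haniso : QAniso a b) {u : QuaternionAlgebra K a 0 b} (hu : u ≠ 0) :
    IsUnit u := by
  have hN := qnrd_ne_zero haniso hu
  refine isUnit_iff_exists.2 ⟨(qnrd a b u)⁻¹ • star u, ?_, ?_⟩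
  · rw [mul_smul_comm, mul_star_eq_qnrd, ← coe_mul_eq_smul, ← coe_mul, inv_mul_cancel₀ hN, coe_one]
  · rw [smul_mul_assoc, star_mul_eq_qnrd, ← coe_mul_eq_smul, ← coe_mul, inv_mul_cancel₀ hN, coe_one]

lemma exists_conj_star_mk_eq {lam mu : QuaternionAlgebra K a 0 b} (hmu : lam * mu = 1)
    (hlam : lam = 1 ∨ lam = ⟨0, 1, 0, 0⟩ ∨ lam = ⟨0, 0, 1, 0⟩) :
    ∃ s₁ s₂ s₃ : K, ∀ r i j k : K,
      lam * star (⟨r, i, j, k⟩ : QuaternionAlgebra K a 0 b) * mu = ⟨r, s₁ * i, s₂ * j, s₃ * k⟩ := by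
  rcases hlam with rfl | rfl | rfl
  · refine ⟨-1, -1, -1, fun r i j k => conj_star_eq_of_mul_eq hmu ?_⟩
    ext <;> simp
  · refine ⟨-1, 1, 1, fun r i j k => conj_star_eq_of_mul_eq hmu ?_⟩
    ext <;> simp
  · refine ⟨1, -1, 1, fun r i j k => conj_star_eq_of_mul_eq hmu ?_⟩
    ext <;> simp

lemma map_mk_eq_smul_and_map_mk_eq_smul {σ : QuaternionAlgebra K a 0 b → QuaternionAlgebra K a 0 b}
    {s₁ s₂ s₃ : K} (hσ : ∀ r i j k : K, σ ⟨r, i, j, k⟩ = ⟨r, s₁ * i, s₂ * j, s₃ * k⟩)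
    {ε δ α β γ : K} (hsym : σ ⟨δ, α, β, γ⟩ = ε • ⟨δ, α, β, γ⟩) :
    σ ⟨δ, α, 0, 0⟩ = ε • ⟨δ, α, 0, 0⟩ ∧ σ ⟨0, 0, β, γ⟩ = ε • ⟨0, 0, β, γ⟩ := by
  simp only [hσ, smul_mk, mk.injEq, smul_eq_mul, mul_zero] at hsym ⊢
  obtain ⟨h₀, h₁, h₂, h₃⟩ := hsym
  exact ⟨⟨h₀, h₁, trivial, trivial⟩, ⟨trivial, trivial, h₂, h₃⟩⟩

lemma exists_mul_eq_and_mul_self_eq {δ α : K} (hN : δ ^ 2 - a * α ^ 2 ≠ 0) (β γ : K) :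
    ∃ v : QuaternionAlgebra K a 0 b, v.re = 0 ∧ ⟨δ, α, 0, 0⟩ * v = ⟨0, 0, β, γ⟩ ∧
      v * v = algebraMap K _ (b * (β ^ 2 - a * γ ^ 2) / (δ ^ 2 - a * α ^ 2)) := by
  have hqnrd : qnrd a b (⟨δ, α, 0, 0⟩ : QuaternionAlgebra K a 0 b) = δ ^ 2 - a * α ^ 2 := by
    simp [qnrd]
  refine ⟨(δ ^ 2 - a * α ^ 2)⁻¹ • (star ⟨δ, α, 0, 0⟩ * ⟨0, 0, β, γ⟩), by simp, ?_, ?_⟩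
  · rw [mul_smul_comm, ← mul_assoc, mul_star_eq_qnrd, hqnrd, coe_mul_eq_smul, smul_smul,
      inv_mul_cancel₀ hN, one_smul]
  · ext <;> simp <;> field_simp <;> ring

end Quaternion

theorem stmt_3_general (K : Type) [Field K] (V : DVal K)
    -- K is complete with residue field of characteristic ≠ 2
    (hcomp : V.IsComplete) (hchar : V.ResCharNeTwo)
    -- D = ℍ[K,a,ϖ] with a ∈ O_K^×, ϖ a uniformizer, D a division ring
    (a ϖ : K) (hva : V.ν a = 0) (hvϖ : V.ν ϖ = 1)
    (haniso : QAniso a ϖ)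
    -- σ = τ_λ with λ ∈ {1, x, y} (μ = λ⁻¹)
    (lam mu : QuaternionAlgebra K a 0 ϖ)
    (hlam : lam = 1 ∨ lam = (⟨0, 1, 0, 0⟩ : QuaternionAlgebra K a 0 ϖ) ∨ lam = (⟨0, 0, 1, 0⟩ : QuaternionAlgebra K a 0 ϖ))
    (hmu : lam * mu = 1) (hmu' : mu * lam = 1)
    (σ : QuaternionAlgebra K a 0 ϖ → QuaternionAlgebra K a 0 ϖ)
    (hσ : ∀ u, σ u = lam * qtau u * mu)
    -- ε ∈ {1, -1}
    (ε : K) (hε : ε = 1 ∨ ε = -1)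
    -- u = δ + αx + βy + γz with coordinates in O_K, σ(u) = ε·u, ν_D(u) = 0
    (δ α β γ : K) (hβ : V.Int β) (hγ : V.Int γ)
    (hu0 : (⟨δ, α, β, γ⟩ : QuaternionAlgebra K a 0 ϖ) ≠ 0)
    (hsym : σ ⟨δ, α, β, γ⟩ = ε • (⟨δ, α, β, γ⟩ : QuaternionAlgebra K a 0 ϖ))
    (hval : qnu V a ϖ (⟨δ, α, β, γ⟩ : QuaternionAlgebra K a 0 ϖ) = 0) :
    ∃ t : QuaternionAlgebra K a 0 ϖ, IsUnit t ∧
      (⟨δ, α, β, γ⟩ : QuaternionAlgebra K a 0 ϖ) =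
        σ t * (⟨δ, α, 0, 0⟩ : QuaternionAlgebra K a 0 ϖ) * t := by
  simp only [qtau_eq_star] at hσ
  have hσmul : ∀ x y, σ (x * y) = σ y * σ x := fun x y => by rw [hσ, hσ, hσ, conj_star_mul hmu']
  have hσadd : ∀ x y, σ (x + y) = σ x + σ y := fun x y => by
    rw [hσ, hσ, hσ, star_add, mul_add, add_mul]
  have hσalg : ∀ r : K, σ (algebraMap K _ r) = algebraMap K _ r := fun r => by
    rw [hσ, QuaternionAlgebra.coe_algebraMap, QuaternionAlgebra.star_coe,
      ← QuaternionAlgebra.coe_commutes, mul_assoc, hmu, mul_one]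
  obtain ⟨s₁, s₂, s₃, hdiag⟩ := exists_conj_star_mk_eq hmu hlam
  obtain ⟨hu₀, hw⟩ :=
    map_mk_eq_smul_and_map_mk_eq_smul (fun r i j k => (hσ _).trans (hdiag r i j k)) hsym
  have hNrd : V.IntUnit (qnrd a ϖ ⟨δ, α, β, γ⟩) :=
    ⟨qnrd_ne_zero haniso hu0, by simpa [qnu] using hval⟩
  have hϖN₁ : V.AtLeast 1 (ϖ * (β ^ 2 - a * γ ^ 2)) := by
    have hϖ : V.AtLeast 1 ϖ := Or.inr hvϖ.ge
    have ha : V.AtLeast 0 a := Or.inr hva.ge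
    simpa [sq] using hϖ.mul ((DVal.AtLeast.mul hβ hβ).sub (ha.mul (DVal.AtLeast.mul hγ hγ)))
  have hN₀ : V.IntUnit (δ ^ 2 - a * α ^ 2) := by
    convert hNrd.add_atLeast_one hϖN₁ using 1
    simp only [qnrd]; ring
  obtain ⟨p, hp, hpc⟩ :=
    DVal.exists_four_mul_sq_mul_one_sub_sq_eq hcomp hchar (hϖN₁.div_intUnit hN₀)
  obtain ⟨v, hvre, hv, hvv⟩ := exists_mul_eq_and_mul_self_eq hN₀.1 (b := ϖ) β γ
  refine ⟨algebraMap K _ p + (2 * p)⁻¹ • v, isUnit_of_qAniso haniso fun ht => hp ?_, ?_⟩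
  · simpa [hvre] using congrArg QuaternionAlgebra.re ht
  · have hε0 : ε ≠ 0 := by rcases hε with rfl | rfl <;> norm_num
    rw [show (⟨δ, α, β, γ⟩ : QuaternionAlgebra K a 0 ϖ) = ⟨δ, α, 0, 0⟩ + ⟨0, 0, β, γ⟩ by
      ext <;> simp]
    exact add_eq_map_mul_mul_of_eq_smul hσmul hσadd hσalg hchar.1 hε0 hu₀ hw hv hp hpc hvv

/-- an unramified diagonal entry `u = δ + αx + βy + γz` (a unit of `O_D`)
of an ε-hermitian form over `(D, τ_λ)`, `λ ∈ {1,x,y}`, is isometric to `δ + αx`. -/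
theorem stmt_3 (K : Type) [Field K] (V : DVal K)
    -- K is complete with residue field of characteristic ≠ 2
    (hcomp : V.IsComplete) (hchar : V.ResCharNeTwo)
    -- D = ℍ[K,a,ϖ] with a ∈ O_K^×, ϖ a uniformizer, D a division ring
    (a ϖ : K) (ha0 : a ≠ 0) (hva : V.ν a = 0) (hϖ0 : ϖ ≠ 0) (hvϖ : V.ν ϖ = 1)
    (haniso : QAniso a ϖ)
    -- σ = τ_λ with λ ∈ {1, x, y} (μ = λ⁻¹)
    (lam mu : QuaternionAlgebra K a 0 ϖ)
    (hlam : lam = 1 ∨ lam = (⟨0, 1, 0, 0⟩ : QuaternionAlgebra K a 0 ϖ) ∨ lam = (⟨0, 0, 1, 0⟩ : QuaternionAlgebra K a 0 ϖ))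
    (hmu : lam * mu = 1) (hmu' : mu * lam = 1)
    (σ : QuaternionAlgebra K a 0 ϖ → QuaternionAlgebra K a 0 ϖ)
    (hσ : ∀ u, σ u = lam * qtau u * mu)
    -- ε ∈ {1, -1}
    (ε : K) (hε : ε = 1 ∨ ε = -1)
    -- u = δ + αx + βy + γz with coordinates in O_K, σ(u) = ε·u, ν_D(u) = 0
    (δ α β γ : K) (hδ : V.Int δ) (hα : V.Int α) (hβ : V.Int β) (hγ : V.Int γ)
    (hu0 : (⟨δ, α, β, γ⟩ : QuaternionAlgebra K a 0 ϖ) ≠ 0)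
    (hsym : σ ⟨δ, α, β, γ⟩ = ε • (⟨δ, α, β, γ⟩ : QuaternionAlgebra K a 0 ϖ))
    (hval : qnu V a ϖ (⟨δ, α, β, γ⟩ : QuaternionAlgebra K a 0 ϖ) = 0) :
    ∃ t : QuaternionAlgebra K a 0 ϖ, IsUnit t ∧
      (⟨δ, α, β, γ⟩ : QuaternionAlgebra K a 0 ϖ) =
        σ t * (⟨δ, α, 0, 0⟩ : QuaternionAlgebra K a 0 ϖ) * t :=
  stmt_3_general K V hcomp hchar a ϖ hva hvϖ haniso lam mu hlam hmu hmu' σ hσ ε hε δ α β γ hβ hγ hu0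
    hsym hval
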